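/- Universal simulation by sawtooth maps: Let Q_Y be any Borel probability measure on ℝ with quantile function G^{-1}, and for Δ > 0 define f_Δ(x) = Σ_{i∈ℤ} G^{-1}((x − iΔ)/Δ)·1{x ∈ (iΔ, (i+1)Δ]}. Then for every absolutely continuous Borel probability measure P_X on ℝ, |(f_Δ)_*P_X − Q_Y|_TV → 0 as Δ → 0. -/

import Mathlib

open MeasureTheory Set Filter

noncomputable def cdfR (μ : Measure ℝ) (x : ℝ) : ℝ := (μ (Set.Iic x)).toReal

noncomputable def quantile (ν : Measure ℝ) (t : ℝ) : ℝ := sInf {y : ℝ | t ≤ cdfR ν y}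

/-- The sawtooth simulator: on each interval `(iΔ, (i+1)Δ]` (where `i = ⌈x/Δ⌉ - 1`),
map `x` to `G⁻¹((x - iΔ)/Δ)`. -/
noncomputable def sawtooth (ν : Measure ℝ) (Δ : ℝ) (x : ℝ) : ℝ :=
  quantile ν ((x - ((⌈x / Δ⌉ : ℝ) - 1) * Δ) / Δ)

noncomputable def TVdist {α : Type*} [MeasurableSpace α] (μ ν : Measure α) : ℝ :=
  ⨆ A : {s : Set α // MeasurableSet s}, |(μ A).toReal - (ν A).toReal|

/-!
Off the P-null grid `Δℤ`, `sawtooth Q Δ` is `G⁻¹ ∘ fract (· / Δ)`, and `G⁻¹` pushes the uniform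
law on `(0, 1)` forward to `Q`. Since pushing forward cannot increase total variation, it suffices
that the law of `fract (X / Δ)` tends to the uniform law in total variation. Each discrepancy
`P(fract (X / Δ) ∈ A) - |A|` is `∫ p(x) φ(x / Δ) dx` with `φ` 1-periodic, bounded by 1 and of mean
zero. Approximate the density `p` in `L¹` by a continuous compactly supported `g`; on each interval
of length `Δ`, `g` is nearly constant, and constants integrate to zero against `φ (· / Δ)`.
-/

open scoped Topology
open ProbabilityTheory

section TVdist

variable {α β : Type*} [MeasurableSpace α] [MeasurableSpace β] {μ ν : Measure α}

lemma TVdist_nonneg : 0 ≤ TVdist μ ν :=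
  Real.iSup_nonneg fun _ => abs_nonneg _

lemma abs_measureReal_sub_le_TVdist [IsFiniteMeasure μ] [IsFiniteMeasure ν] {A : Set α}
    (hA : MeasurableSet A) : |μ.real A - ν.real A| ≤ TVdist μ ν := by
  refine le_ciSup (f := fun A : {s : Set α // MeasurableSet s} => |μ.real A - ν.real A|)
    ⟨μ.real univ + ν.real univ, ?_⟩ ⟨A, hA⟩
  rintro _ ⟨B, rfl⟩
  have hμ : μ.real B ≤ μ.real univ := measureReal_mono (subset_univ _)
  have hν : ν.real B ≤ ν.real univ := measureReal_mono (subset_univ _)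
  rw [abs_sub_le_iff]
  constructor <;> linarith [measureReal_nonneg (μ := μ) (s := B),
    measureReal_nonneg (μ := ν) (s := B)]

lemma TVdist_le {ε : ℝ} (h : ∀ A, MeasurableSet A → |μ.real A - ν.real A| ≤ ε) :
    TVdist μ ν ≤ ε :=
  have : Nonempty {s : Set α // MeasurableSet s} := ⟨⟨∅, .empty⟩⟩
  ciSup_le fun A => h A A.2

lemma TVdist_map_le [IsFiniteMeasure μ] [IsFiniteMeasure ν] {f : α → β} (hf : Measurable f) :
    TVdist (μ.map f) (ν.map f) ≤ TVdist μ ν :=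
  TVdist_le fun A hA => by
    simpa only [map_measureReal_apply hf hA] using abs_measureReal_sub_le_TVdist (hf hA)

end TVdist

section Quantile

variable (Q : Measure ℝ)

lemma cdfR_eq_cdf [IsProbabilityMeasure Q] : cdfR Q = cdf Q :=
  funext fun y => (cdf_eq_real Q y).symm

lemma bddBelow_setOf_le_cdf {t : ℝ} (ht : 0 < t) : BddBelow {y | t ≤ cdf Q y} := by
  obtain ⟨y₀, hy₀⟩ := eventually_atBot.1 ((tendsto_cdf_atBot Q).eventually_lt_const ht)
  exact ⟨y₀, fun y hy => le_of_not_gt fun hlt => (hy₀ y hlt.le).not_ge hy⟩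

lemma nonempty_setOf_le_cdf {t : ℝ} (ht : t < 1) : {y | t ≤ cdf Q y}.Nonempty :=
  ((tendsto_cdf_atTop Q).eventually_const_le ht).exists

lemma quantile_le_iff [IsProbabilityMeasure Q] {t y : ℝ} (ht : t ∈ Ioo 0 1) :
    quantile Q t ≤ y ↔ t ≤ cdf Q y := by
  rw [quantile, cdfR_eq_cdf]
  refine ⟨fun h => ?_, fun h => csInf_le (bddBelow_setOf_le_cdf Q ht.1) h⟩
  -- every `z > y` lies above the infimum, and `cdf` is right-continuous
  have hz : ∀ z, y < z → t ≤ cdf Q z := fun z hyz => by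
    obtain ⟨s, hs, hsz⟩ := (csInf_lt_iff (bddBelow_setOf_le_cdf Q ht.1)
      (nonempty_setOf_le_cdf Q ht.2)).1 (h.trans_lt hyz)
    exact hs.trans (monotone_cdf Q hsz.le)
  exact ge_of_tendsto (((cdf Q).right_continuous y).mono Ioi_subset_Ici_self)
    (eventually_nhdsWithin_of_forall hz)

lemma quantile_mono [IsProbabilityMeasure Q] {t₁ t₂ : ℝ} (h₁ : 0 < t₁) (h₂ : t₂ < 1)
    (h : t₁ ≤ t₂) : quantile Q t₁ ≤ quantile Q t₂ := by
  rw [quantile, quantile, cdfR_eq_cdf]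
  exact csInf_le_csInf (bddBelow_setOf_le_cdf Q h₁) (nonempty_setOf_le_cdf Q h₂)
    fun y hy => h.trans hy

instance : IsProbabilityMeasure (volume.restrict (Ioo (0 : ℝ) 1)) :=
  ⟨by simp⟩

/-- Off `(0, 1)`, `quantile` takes junk values and is not the generalized inverse of the cdf. -/
noncomputable def unitQuantile (t : ℝ) : ℝ := if t ∈ Ioo 0 1 then quantile Q t else 0

lemma measurable_unitQuantile [IsProbabilityMeasure Q] : Measurable (unitQuantile Q) := by
  refine measurable_of_restrict_of_restrict_compl (measurableSet_Ioo (a := 0) (b := 1)) ?_ ?_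
  · refine Monotone.measurable fun s t hst => ?_
    simp only [domRestrict_apply, unitQuantile, if_pos s.2, if_pos t.2]
    exact quantile_mono Q s.2.1 t.2.2 hst
  · have : (Ioo (0 : ℝ) 1)ᶜ.domRestrict (unitQuantile Q) = fun _ => 0 := by
      ext ⟨t, ht⟩
      exact if_neg ht
    rw [this]
    exact measurable_const

lemma map_unitQuantile [IsProbabilityMeasure Q] :
    (volume.restrict (Ioo 0 1)).map (unitQuantile Q) = Q := by
  refine Measure.ext_of_Iic _ _ fun y => ?_
  have hpre : unitQuantile Q ⁻¹' Iic y ∩ Ioo 0 1 = Iic (cdf Q y) ∩ Ioo 0 1 := by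
    ext t
    simp only [mem_inter_iff, mem_preimage, mem_Iic, and_congr_left_iff]
    intro ht
    rw [unitQuantile, if_pos ht, quantile_le_iff Q ht]
  rw [Measure.map_apply (measurable_unitQuantile Q) measurableSet_Iic,
    Measure.restrict_apply (measurable_unitQuantile Q measurableSet_Iic), hpre,
    ← Measure.restrict_apply measurableSet_Iic, Measure.restrict_congr_set Ioo_ae_eq_Ioc,
    Measure.restrict_apply measurableSet_Iic, Iic_inter_Ioc_of_le (cdf_le_one Q y),
    Real.volume_Ioc, sub_zero, cdf_eq_real, measureReal_def,
    ENNReal.ofReal_toReal (measure_ne_top _ _)]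

end Quantile

lemma measurable_fract_div (Δ : ℝ) : Measurable fun x : ℝ => Int.fract (x / Δ) :=
  measurable_fract.comp (measurable_id.div_const Δ)

section Sawtooth

variable (Q : Measure ℝ) {P : Measure ℝ} {Δ : ℝ}

lemma sawtooth_eq_unitQuantile_fract (hΔ : Δ ≠ 0) {x : ℝ} (hx : Int.fract (x / Δ) ≠ 0) :
    sawtooth Q Δ x = unitQuantile Q (Int.fract (x / Δ)) := by
  have harg : (x - ((⌈x / Δ⌉ : ℝ) - 1) * Δ) / Δ = Int.fract (x / Δ) := by
    rw [sub_div, mul_div_cancel_right₀ _ hΔ]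
    linarith [Int.ceil_sub_self_eq hx]
  rw [sawtooth, harg, unitQuantile,
    if_pos ⟨(Int.fract_nonneg _).lt_of_ne' hx, Int.fract_lt_one _⟩]

lemma ae_fract_div_ne_zero (hP : P ≪ volume) (hΔ : Δ ≠ 0) :
    ∀ᵐ x ∂P, Int.fract (x / Δ) ≠ 0 := by
  refine hP.ae_le (measure_mono_null (fun x hx => ?_)
    ((countable_range fun n : ℤ => n * Δ).measure_zero volume))
  refine ⟨⌊x / Δ⌋, ?_⟩
  have := Int.self_sub_floor (x / Δ) ▸ not_not.1 hx
  field_simp at this ⊢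
  linarith

lemma map_sawtooth_eq [IsProbabilityMeasure Q] (hP : P ≪ volume) (hΔ : Δ ≠ 0) :
    P.map (sawtooth Q Δ) = (P.map fun x => Int.fract (x / Δ)).map (unitQuantile Q) := by
  rw [Measure.map_map (measurable_unitQuantile Q) (measurable_fract_div Δ)]
  exact Measure.map_congr ((ae_fract_div_ne_zero hP hΔ).mono fun x hx =>
    sawtooth_eq_unitQuantile_fract Q hΔ hx)

end Sawtooth

lemma abs_integral_mul_sub_integral_mul_le {α : Type*} [MeasurableSpace α] {μ : Measure α}
    {f g ψ : α → ℝ} (hf : Integrable f μ) (hg : Integrable g μ) (hψ : AEStronglyMeasurable ψ μ)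
    (hψ1 : ∀ x, |ψ x| ≤ 1) :
    |∫ x, f x * ψ x ∂μ - ∫ x, g x * ψ x ∂μ| ≤ ∫ x, |f x - g x| ∂μ := by
  have hψ1' : ∀ᵐ x ∂μ, ‖ψ x‖ ≤ 1 := ae_of_all _ hψ1
  rw [← integral_sub (hf.mul_bdd hψ hψ1') (hg.mul_bdd hψ hψ1')]
  refine abs_integral_le_integral_abs.trans (integral_mono ?_ (hf.sub hg).abs fun x => ?_)
  · exact ((hf.sub hg).mul_bdd hψ hψ1').abs.congr (ae_of_all _ fun x => by simp [sub_mul])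
  · simpa [← sub_mul, abs_mul] using mul_le_of_le_one_right (abs_nonneg _) (hψ1 x)

section Equidistribution

variable {φ : ℝ → ℝ}

lemma intervalIntegrable_of_abs_le {M : ℝ} (hφm : Measurable φ) (hφM : ∀ u, |φ u| ≤ M)
    (a b : ℝ) : IntervalIntegrable φ volume a b := by
  rw [intervalIntegrable_iff]
  exact Measure.integrableOn_of_bounded (by simp [Real.volume_uIoc]) hφm.aestronglyMeasurable
    (ae_of_all _ hφM)

lemma integral_comp_div_eq_zero_of_periodic (hφ : Function.Periodic φ 1)
    (hmean : ∫ u in 0..1, φ u = 0) {Δ : ℝ} (hΔ : Δ ≠ 0) (a : ℝ) :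
    ∫ x in a..a + Δ, φ (x / Δ) = 0 := by
  rw [intervalIntegral.integral_comp_div _ hΔ, add_div, div_self hΔ,
    hφ.intervalIntegral_add_eq (a / Δ) 0, zero_add, hmean, smul_zero]

lemma abs_intervalIntegral_mul_comp_div_le (hφm : Measurable φ) (hφ1 : ∀ u, |φ u| ≤ 1)
    (hφ : Function.Periodic φ 1) (hmean : ∫ u in 0..1, φ u = 0) {g : ℝ → ℝ} (hg : Continuous g)
    {a Δ η : ℝ} (hΔ : 0 < Δ) (hosc : ∀ x ∈ Icc a (a + Δ), |g x - g a| ≤ η) :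
    |∫ x in a..a + Δ, g x * φ (x / Δ)| ≤ η * Δ := by
  have hint : IntervalIntegrable (fun x => φ (x / Δ)) volume a (a + Δ) :=
    intervalIntegrable_of_abs_le (hφm.comp (measurable_id.div_const Δ)) (fun x => hφ1 (x / Δ)) _ _
  have hshift : ∫ x in a..a + Δ, g x * φ (x / Δ) = ∫ x in a..a + Δ, (g x - g a) * φ (x / Δ) := by
    simp_rw [sub_mul]
    rw [intervalIntegral.integral_sub (hint.continuousOn_mul hg.continuousOn) (hint.const_mul _),
      intervalIntegral.integral_const_mul, integral_comp_div_eq_zero_of_periodic hφ hmean hΔ.ne',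
      mul_zero, sub_zero]
  have hbound := intervalIntegral.norm_integral_le_of_norm_le_const
    (f := fun x => (g x - g a) * φ (x / Δ)) (a := a) (b := a + Δ) (C := η) fun x hx => by
      rw [uIoc_of_le (by linarith)] at hx
      have hη : 0 ≤ η := (abs_nonneg _).trans (hosc a (by simp [hΔ.le]))
      simpa [abs_mul] using (mul_le_mul (hosc x (Ioc_subset_Icc_self hx)) (hφ1 _) (abs_nonneg _)
        hη).trans_eq (mul_one η)
  rw [hshift, ← Real.norm_eq_abs]
  simpa [abs_of_pos hΔ] using hbound

lemma abs_integral_mul_comp_div_le (hφm : Measurable φ) (hφ1 : ∀ u, |φ u| ≤ 1)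
    (hφ : Function.Periodic φ 1) (hmean : ∫ u in 0..1, φ u = 0) {g : ℝ → ℝ} (hg : Continuous g)
    {a b Δ η : ℝ} (hab : a ≤ b) (hsupp : Function.support g ⊆ Ioc a b) (hΔ : 0 < Δ)
    (hosc : ∀ x y, |x - y| ≤ Δ → |g x - g y| ≤ η) :
    |∫ x, g x * φ (x / Δ)| ≤ η * (b - a + Δ) := by
  set N := ⌈(b - a) / Δ⌉₊
  have hN : b - a ≤ N * Δ := (div_le_iff₀ hΔ).1 (Nat.le_ceil _)
  have hN' : N * Δ ≤ b - a + Δ := by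
    have := Nat.ceil_lt_add_one (div_nonneg (sub_nonneg.2 hab) hΔ.le)
    rw [← le_div_iff₀ hΔ, add_div, div_self hΔ.ne']
    exact this.le
  have hη : 0 ≤ η := by simpa using hosc a a (by simp [hΔ.le])
  have hsplit : ∫ x, g x * φ (x / Δ) =
      ∑ k ∈ Finset.range N, ∫ x in a + k * Δ..a + k * Δ + Δ, g x * φ (x / Δ) := by
    rw [← intervalIntegral.integral_eq_integral_of_support_subset (a := a) (b := a + N * Δ)
      ((Function.support_mul_subset_left _ _).trans (hsupp.trans
        (Ioc_subset_Ioc_right (by linarith))))]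
    have := intervalIntegral.sum_integral_adjacent_intervals (μ := volume)
      (a := fun k : ℕ => a + k * Δ) (n := N) (f := fun x => g x * φ (x / Δ)) fun k _ =>
        (intervalIntegrable_of_abs_le (hφm.comp (measurable_id.div_const Δ))
          (fun x => hφ1 (x / Δ)) _ _).continuousOn_mul hg.continuousOn
    simp only [Nat.cast_add, Nat.cast_one, add_mul, one_mul, ← add_assoc, Nat.cast_zero,
      zero_mul, add_zero] at this
    exact this.symm
  have hcell : ∀ k : ℕ, |∫ x in a + k * Δ..a + k * Δ + Δ, g x * φ (x / Δ)| ≤ η * Δ :=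
    fun k => abs_intervalIntegral_mul_comp_div_le hφm hφ1 hφ hmean hg hΔ fun x hx =>
      hosc _ _ (abs_le.2 ⟨by linarith [hx.1], by linarith [hx.2]⟩)
  calc |∫ x, g x * φ (x / Δ)|
      ≤ ∑ k ∈ Finset.range N, |∫ x in a + k * Δ..a + k * Δ + Δ, g x * φ (x / Δ)| := by
        rw [hsplit]; exact Finset.abs_sum_le_sum_abs _ _
    _ ≤ N * (η * Δ) := by
        simpa using Finset.sum_le_sum fun k (_ : k ∈ Finset.range N) => hcell k
    _ ≤ η * (b - a + Δ) := by nlinarith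

theorem eventually_abs_integral_mul_comp_div_le {f : ℝ → ℝ} (hf : Integrable f) {ε : ℝ}
    (hε : 0 < ε) :
    ∀ᶠ Δ in 𝓝[>] 0, ∀ φ : ℝ → ℝ, Measurable φ → (∀ u, |φ u| ≤ 1) → Function.Periodic φ 1 →
      ∫ u in 0..1, φ u = 0 → |∫ x, f x * φ (x / Δ)| ≤ ε := by
  obtain ⟨g, hg_supp, hfg, hg, hg_int⟩ := hf.exists_hasCompactSupport_integral_sub_le (half_pos hε)
  obtain ⟨R, hR0, hR⟩ := hg_supp.isCompact.isBounded.subset_closedBall_lt 0 0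
  set η := ε / 2 / (2 * R + 2)
  obtain ⟨δ, hδ, hδg⟩ := Metric.uniformContinuous_iff.1
    (hg_supp.uniformContinuous_of_continuous hg) η (by positivity)
  filter_upwards [Ioo_mem_nhdsGT (lt_min hδ one_pos)] with Δ ⟨hΔ0, hΔ⟩ φ hφm hφ1 hφ hmean
  have hsupp : Function.support g ⊆ Ioc (-R - 1) R := fun x hx => by
    have := hR (subset_tsupport g hx)
    simp only [Real.closedBall_eq_Icc, zero_sub, zero_add, mem_Icc] at this
    exact ⟨by linarith, this.2⟩
  have hg_bound := abs_integral_mul_comp_div_le hφm hφ1 hφ hmean hg (by linarith) hsupp hΔ0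
    fun x y hxy => (hδg (lt_of_le_of_lt hxy (lt_of_lt_of_le hΔ (min_le_left _ _)))).le
  have hfg_bound := abs_integral_mul_sub_integral_mul_le (ψ := fun x => φ (x / Δ)) hf hg_int
    (hφm.comp (measurable_id.div_const Δ)).aestronglyMeasurable fun x => hφ1 (x / Δ)
  have hηR : η * (R - (-R - 1) + Δ) ≤ ε / 2 := by
    have : η * (2 * R + 2) = ε / 2 := div_mul_cancel₀ _ (by positivity)
    nlinarith [min_le_right δ 1]
  simp only [Real.norm_eq_abs] at hfg
  calc |∫ x, f x * φ (x / Δ)|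
      ≤ |∫ x, g x * φ (x / Δ)| + |(∫ x, f x * φ (x / Δ)) - ∫ x, g x * φ (x / Δ)| :=
        norm_le_norm_add_norm_sub' (∫ x, f x * φ (x / Δ)) (∫ x, g x * φ (x / Δ))
    _ ≤ ε / 2 + ε / 2 := add_le_add (hg_bound.trans hηR) (hfg_bound.trans hfg)
    _ = ε := add_halves ε

end Equidistribution

lemma integral_indicator_fract {A : Set ℝ} (hA : MeasurableSet A) :
    ∫ u in 0..1, A.indicator 1 (Int.fract u) = (volume.restrict (Ioo (0 : ℝ) 1)).real A := by
  rw [intervalIntegral.integral_of_le zero_le_one, integral_Ioc_eq_integral_Ioo,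
    setIntegral_congr_fun measurableSet_Ioo fun u hu => by
      rw [Int.fract_eq_self.2 ⟨hu.1.le, hu.2⟩], integral_indicator_one hA]

lemma measureReal_preimage_fract_div_sub_eq_integral {P : Measure ℝ} [IsProbabilityMeasure P]
    (hP : P ≪ volume) {A : Set ℝ} (hA : MeasurableSet A) {Δ c : ℝ} :
    P.real ((fun x => Int.fract (x / Δ)) ⁻¹' A) - c =
      ∫ x, (P.rnDeriv volume x).toReal * (A.indicator 1 (Int.fract (x / Δ)) - c) := by
  have hS := measurable_fract_div Δ hA
  have hind : Integrable (((fun x => Int.fract (x / Δ)) ⁻¹' A).indicator 1) P :=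
    (integrable_const (1 : ℝ)).indicator hS
  have hpre : ∀ x, A.indicator (1 : ℝ → ℝ) (Int.fract (x / Δ)) =
      ((fun x => Int.fract (x / Δ)) ⁻¹' A).indicator 1 x := fun x => by
    by_cases hx : Int.fract (x / Δ) ∈ A <;> simp [hx]
  simp only [integral_toReal_rnDeriv_mul hP, hpre]
  rw [integral_sub hind (integrable_const _), integral_indicator_one hS, integral_const,
    probReal_univ, one_smul]

theorem tendsto_TVdist_map_fract_div {P : Measure ℝ} [IsProbabilityMeasure P] (hP : P ≪ volume) :
    Tendsto (fun Δ => TVdist (P.map fun x => Int.fract (x / Δ)) (volume.restrict (Ioo 0 1)))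
      (𝓝[>] 0) (𝓝 0) := by
  set U := volume.restrict (Ioo (0 : ℝ) 1)
  refine Metric.tendsto_nhds.2 fun ε hε => ?_
  filter_upwards [eventually_abs_integral_mul_comp_div_le
    (Measure.integrable_toReal_rnDeriv (μ := P)) (half_pos hε)] with Δ hΔ
  rw [Real.dist_0_eq_abs, abs_of_nonneg TVdist_nonneg]
  refine (TVdist_le fun A hA => ?_).trans_lt (half_lt_self hε)
  set φ : ℝ → ℝ := fun u => A.indicator 1 (Int.fract u) - U.real A
  have hind : Measurable fun u => A.indicator (1 : ℝ → ℝ) (Int.fract u) :=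
    (measurable_const.indicator hA).comp measurable_fract
  have hind01 : ∀ u, A.indicator (1 : ℝ → ℝ) (Int.fract u) ∈ Icc 0 1 := fun u => by
    by_cases hu : Int.fract u ∈ A <;> simp [hu]
  have hUA : U.real A ∈ Icc 0 1 := ⟨measureReal_nonneg, measureReal_le_one⟩
  have hind1 : ∀ u, |A.indicator (1 : ℝ → ℝ) (Int.fract u)| ≤ 1 := fun u =>
    abs_le.2 ⟨by linarith [(hind01 u).1], (hind01 u).2⟩
  have hφ1 : ∀ u, |φ u| ≤ 1 := fun u =>
    abs_le.2 ⟨by linarith [(hind01 u).1, hUA.2], by linarith [(hind01 u).2, hUA.1]⟩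
  have hmean : ∫ u in 0..1, φ u = 0 := by
    rw [intervalIntegral.integral_sub (intervalIntegrable_of_abs_le hind hind1 0 1)
      intervalIntegrable_const, integral_indicator_fract hA, intervalIntegral.integral_const,
      sub_zero, one_smul, sub_self]
  rw [map_measureReal_apply (measurable_fract_div Δ) hA,
    measureReal_preimage_fract_div_sub_eq_integral hP hA]
  exact hΔ φ (hind.sub_const _) hφ1 (fun u => by simp [φ, Int.fract_add_one]) hmean

/-- Universal simulation by sawtooth maps: for every absolutely continuous seed `P`,
the total variation error of the (P-independent) sawtooth simulator vanishes as `Δ → 0⁺`. -/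
theorem sawtooth_universal_simulation (Q : Measure ℝ) [IsProbabilityMeasure Q]
    (P : Measure ℝ) [IsProbabilityMeasure P] (hP : P ≪ (volume : Measure ℝ)) :
    Tendsto (fun Δ : ℝ => TVdist (P.map (sawtooth Q Δ)) Q) (nhdsWithin 0 (Set.Ioi 0))
      (nhds 0) := by
  refine squeeze_zero' (Eventually.of_forall fun _ => TVdist_nonneg) ?_
    (tendsto_TVdist_map_fract_div hP)
  filter_upwards [self_mem_nhdsWithin] with Δ (hΔ : 0 < Δ)
  calc TVdist (P.map (sawtooth Q Δ)) Q
      = TVdist ((P.map fun x => Int.fract (x / Δ)).map (unitQuantile Q))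
          ((volume.restrict (Ioo 0 1)).map (unitQuantile Q)) := by
        rw [map_sawtooth_eq Q hP hΔ.ne', map_unitQuantile]
    _ ≤ TVdist (P.map fun x => Int.fract (x / Δ)) (volume.restrict (Ioo 0 1)) :=
        TVdist_map_le (measurable_unitQuantile Q)
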